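/- arXiv:2412.06069 — 3 statements merged into one kernel-verified Lean document; each statement's English description precedes it below -/
import Mathlib

section
/- Let D ⊆ ℝ^d be a finite nonempty set, φ = max_{x ∈ D} ‖x‖₂, and for x ∈ D set z(x) = (√(φ² − ‖x‖₂²), xᵀ)ᵀ ∈ ℝ^{d+1}; for a query q ∈ ℝ^d set q_z = (0, qᵀ)ᵀ. Then a vector x* ∈ D satisfies ⟨x*, q⟩ = max_{x ∈ D} ⟨x, q⟩ if and only if ‖q_z − z(x*)‖₂ = min_{x ∈ D} ‖q_z − z(x)‖₂. That is, Maximum Inner Product Search over D is equivalent to Nearest Neighbor Search over the lifted set z(D). -/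
/-!
The lift puts every point of `D` on the sphere of radius `φ` in `ℝ^{d+1}` while keeping `q` in
the hyperplane of the first coordinate, so `‖q_z - z x‖² = ‖q‖² + φ² - 2⟪x, q⟫` for `x ∈ D`.
The distance to `q_z` is therefore a strictly decreasing function of the inner product on `D`.
-/

open Finset

theorem Finset.eq_sup'_iff_forall_le {ι α : Type*} [SemilatticeSup α] {s : Finset ι}
    (H : s.Nonempty) (f : ι → α) {a : ι} (ha : a ∈ s) :
    f a = s.sup' H f ↔ ∀ b ∈ s, f b ≤ f a :=
  ⟨fun h _ hb => h ▸ le_sup' f hb, fun h => le_antisymm (le_sup' f ha) (sup'_le H f h)⟩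

theorem Finset.eq_inf'_iff_forall_le {ι α : Type*} [SemilatticeInf α] {s : Finset ι}
    (H : s.Nonempty) (f : ι → α) {a : ι} (ha : a ∈ s) :
    f a = s.inf' H f ↔ ∀ b ∈ s, f a ≤ f b :=
  ⟨fun h _ hb => h ▸ inf'_le f hb, fun h => le_antisymm (le_inf' H f h) (inf'_le f ha)⟩

theorem EuclideanSpace.norm_sq_eq_sq_zero_add {n : ℕ} (w : EuclideanSpace ℝ (Fin (n + 1)))
    (v : EuclideanSpace ℝ (Fin n)) (hs : ∀ i : Fin n, w i.succ = v i) :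
    ‖w‖ ^ 2 = w 0 ^ 2 + ‖v‖ ^ 2 := by
  simp only [EuclideanSpace.norm_sq_eq, Real.norm_eq_abs, sq_abs, Fin.sum_univ_succ, hs]

/-- Equivalence of MIPS and NNS under the lifting transformation:
`x* ∈ D` maximizes `⟨x, q⟩` over `D` iff `z x*` minimizes the distance to `q_z`
over the lifted set `z(D)`. -/
theorem stmt_3 {d : ℕ} (D : Finset (EuclideanSpace ℝ (Fin d))) (hD : D.Nonempty)
    (φ : ℝ) (hφ : φ = D.sup' hD (fun x => ‖x‖))
    (q : EuclideanSpace ℝ (Fin d))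
    (z : EuclideanSpace ℝ (Fin d) → EuclideanSpace ℝ (Fin (d + 1)))
    (hz0 : ∀ x, z x 0 = Real.sqrt (φ ^ 2 - ‖x‖ ^ 2))
    (hzs : ∀ x, ∀ i : Fin d, z x i.succ = x i)
    (qz : EuclideanSpace ℝ (Fin (d + 1)))
    (hq0 : qz 0 = 0)
    (hqs : ∀ i : Fin d, qz i.succ = q i)
    (xs : EuclideanSpace ℝ (Fin d)) (hxs : xs ∈ D) :
    (inner ℝ xs q : ℝ) = D.sup' hD (fun x => (inner ℝ x q : ℝ)) ↔
      ‖qz - z xs‖ = D.inf' hD (fun x => ‖qz - z x‖) := by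
  have dist_sq : ∀ x ∈ D, ‖qz - z x‖ ^ 2 = ‖q‖ ^ 2 + φ ^ 2 - 2 * inner ℝ x q := by
    intro x hx
    have hx_le : ‖x‖ ≤ φ := hφ ▸ le_sup' (fun x => ‖x‖) hx
    have hsplit := EuclideanSpace.norm_sq_eq_sq_zero_add (qz - z x) (q - x)
      (fun i => by simp [hqs, hzs])
    rw [hsplit, PiLp.sub_apply, hq0, hz0, zero_sub, neg_sq,
      Real.sq_sqrt (by nlinarith [norm_nonneg x]), norm_sub_sq_real, real_inner_comm]
    ring
  refine (eq_sup'_iff_forall_le hD (fun x => inner ℝ x q) hxs).trans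
    ((forall₂_congr fun x hx => ?_).trans (eq_inf'_iff_forall_le hD (fun x => ‖qz - z x‖) hxs).symm)
  rw [← pow_le_pow_iff_left₀ (norm_nonneg _) (norm_nonneg _) two_ne_zero,
    dist_sq x hx, dist_sq xs hxs]
  constructor <;> intro h <;> linarith
end

section
/- Let d : ℝ^D × ℝ^D → [0, ∞) be a distortion function that is continuous and coercive in its second argument, i.e., for every fixed x ∈ ℝ^D, d(x, y) → ∞ as ‖y‖₂ → ∞. Let μ be a Borel probability measure on ℝ^D and let k ≥ 1. Then there exists an optimal k-level codebook: a k-tuple C* = (C*_1, …, C*_k) ∈ (ℝ^D)^k such that ∫ min_{1 ≤ j ≤ k} d(x, C*_j) dμ(x) ≤ ∫ min_{1 ≤ j ≤ k} d(x, C_j) dμ(x) for every k-tuple C ∈ (ℝ^D)^k, where the integrals are extended-real-valued lower Lebesgue integrals. No integrability restriction on μ is needed. -/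
/-!
Let a codeword also take the value `∞` of the one-point compactification of `E`, where it costs
`⊤`. Coercivity makes each cost `y ↦ d(x, y)` continuous at `∞`, so by Fatou's lemma the average
distortion is lower semicontinuous on the compact space `(OnePoint E)ᵏ` and attains its minimum
there. Moving the codewords sitting at `∞` to any finite point can only lower the distortion, which
yields an optimal codebook in `Eᵏ`.
-/

open Filter MeasureTheory Topology OnePoint
open scoped ENNReal

section ProperSpace

variable {E : Type*} [NormedAddCommGroup E] [ProperSpace E]

lemma coclosedCompact_eq_comap_norm_atTop :
    coclosedCompact E = comap (fun y : E => ‖y‖) atTop := by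
  rw [coclosedCompact_eq_cocompact, ← Metric.cobounded_eq_cocompact, comap_norm_atTop]

instance OnePoint.firstCountableTopology : FirstCountableTopology (OnePoint E) where
  nhds_generated_countable
    | ∞ => by
      rw [nhds_infty_eq, coclosedCompact_eq_comap_norm_atTop]
      infer_instance
    | (x : E) => by
      rw [nhds_coe_eq]
      infer_instance

end ProperSpace

section Codebook

variable {α E ι : Type*} [MeasurableSpace α] {e : α → E → ℝ≥0∞}

noncomputable def extendedAverageDistortion (μ : Measure α) (e : α → E → ℝ≥0∞)
    (c : ι → OnePoint E) : ℝ≥0∞ :=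
  ∫⁻ x, ⨅ j, (c j).elim ⊤ (e x) ∂μ

lemma exists_le_extendedAverageDistortion [Nonempty E] (μ : Measure α) (c : ι → OnePoint E) :
    ∃ C : ι → E, ∫⁻ x, ⨅ j, e x (C j) ∂μ ≤ extendedAverageDistortion μ e c := by
  let y₀ : E := Classical.arbitrary E
  refine ⟨fun j => (c j).elim y₀ id, lintegral_mono fun x => le_iInf fun j => ?_⟩
  obtain hj | ⟨y, hj⟩ : c j = (∞ : OnePoint E) ∨ ∃ y : E, c j = y :=
    Option.eq_none_or_eq_some (c j)
  · simp [hj]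
  · simpa [hj] using iInf_le (fun i => e x ((c i).elim y₀ id)) j

variable [TopologicalSpace E] [Fintype ι]

lemma OnePoint.continuous_elim_top {f : E → ℝ≥0∞} (hf : Continuous f)
    (hf_top : Tendsto f (coclosedCompact E) (𝓝 ⊤)) :
    Continuous fun c : OnePoint E => c.elim ⊤ f :=
  (continuousMapMk ⟨f, hf⟩ ⊤ hf_top).continuous

lemma lowerSemicontinuous_extendedAverageDistortion [FirstCountableTopology (OnePoint E)]
    (μ : Measure α) (he_meas : ∀ y, Measurable fun x => e x y) (he_cont : ∀ x, Continuous (e x))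
    (he_top : ∀ x, Tendsto (e x) (coclosedCompact E) (𝓝 ⊤)) :
    LowerSemicontinuous (extendedAverageDistortion μ e : (ι → OnePoint E) → ℝ≥0∞) := by
  have hcont (x : α) : Continuous fun c : ι → OnePoint E => ⨅ j, (c j).elim ⊤ (e x) := by
    simp_rw [← Finset.inf_univ_eq_iInf]
    exact Continuous.finset_inf_apply fun j _ =>
      (continuous_elim_top (he_cont x) (he_top x)).comp (continuous_apply j)
  have hmeas (c : ι → OnePoint E) : Measurable fun x => ⨅ j, (c j).elim ⊤ (e x) := by
    refine .iInf fun j => ?_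
    cases c j with
    | infty => exact measurable_const
    | coe y => exact he_meas y
  refine lowerSemicontinuous_iff_le_liminf.2 fun c => ?_
  calc extendedAverageDistortion μ e c
      = ∫⁻ x, liminf (fun c' : ι → OnePoint E => ⨅ j, (c' j).elim ⊤ (e x)) (𝓝 c) ∂μ :=
        lintegral_congr fun x => ((hcont x).tendsto c).liminf_eq.symm
    _ ≤ _ := lintegral_liminf_le hmeas

theorem exists_optimal_codebook [Nonempty E] [FirstCountableTopology (OnePoint E)]
    (μ : Measure α) (he_meas : ∀ y, Measurable fun x => e x y) (he_cont : ∀ x, Continuous (e x))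
    (he_top : ∀ x, Tendsto (e x) (coclosedCompact E) (𝓝 ⊤)) :
    ∃ C : ι → E, ∀ C' : ι → E, ∫⁻ x, ⨅ j, e x (C j) ∂μ ≤ ∫⁻ x, ⨅ j, e x (C' j) ∂μ := by
  obtain ⟨c, -, hc⟩ := LowerSemicontinuousOn.exists_isMinOn Set.univ_nonempty isCompact_univ
    ((lowerSemicontinuous_extendedAverageDistortion (ι := ι) μ he_meas he_cont
      he_top).lowerSemicontinuousOn _)
  obtain ⟨C, hC⟩ := exists_le_extendedAverageDistortion (e := e) μ c
  exact ⟨C, fun C' => hC.trans (isMinOn_univ_iff.1 hc fun j => C' j)⟩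

end Codebook

theorem stmt_5_general {D : ℕ} (dist : EuclideanSpace ℝ (Fin D) → EuclideanSpace ℝ (Fin D) → ℝ)
    (hd_cont : Continuous (fun p : EuclideanSpace ℝ (Fin D) × EuclideanSpace ℝ (Fin D) =>
      dist p.1 p.2))
    (hd_coercive : ∀ x, Filter.Tendsto (fun y => dist x y)
      (Filter.comap (fun y : EuclideanSpace ℝ (Fin D) => ‖y‖) Filter.atTop) Filter.atTop)
    (μ : MeasureTheory.Measure (EuclideanSpace ℝ (Fin D)))
    (k : ℕ) (hk : 1 ≤ k) :
    ∃ Cstar : Fin k → EuclideanSpace ℝ (Fin D),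
      ∀ C : Fin k → EuclideanSpace ℝ (Fin D),
        ∫⁻ x, ENNReal.ofReal (⨅ j : Fin k, dist x (Cstar j)) ∂μ ≤
          ∫⁻ x, ENNReal.ofReal (⨅ j : Fin k, dist x (C j)) ∂μ := by
  -- for `k = 0` the real infimum would be the junk value `0` rather than the `⊤` of `ℝ≥0∞`
  have : Nonempty (Fin k) := ⟨⟨0, hk⟩⟩
  simp_rw [ENNReal.ofReal_iInf]
  refine exists_optimal_codebook μ
    (fun y => (ENNReal.continuous_ofReal.comp (hd_cont.comp (.prodMk_left y))).measurable)
    (fun x => ENNReal.continuous_ofReal.comp (hd_cont.comp (.prodMk_right x))) fun x => ?_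
  rw [coclosedCompact_eq_comap_norm_atTop]
  exact ENNReal.tendsto_ofReal_atTop.comp (hd_coercive x)

/-- Existence of an optimal `k`-level codebook: if the distortion `d` is continuous,
nonnegative, and coercive in its second argument (`d(x,y) → ∞` as `‖y‖₂ → ∞` for each
fixed `x`), then for any Borel probability measure `μ` on `ℝ^D` and any `k ≥ 1`, some
codebook `C*` minimizes the average distortion
`∫⁻ min_{1 ≤ j ≤ k} d(x, C_j) dμ(x)` over all `k`-tuples `C`. -/
theorem stmt_5 {D : ℕ} (dist : EuclideanSpace ℝ (Fin D) → EuclideanSpace ℝ (Fin D) → ℝ)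
    (hd_nonneg : ∀ x y, 0 ≤ dist x y)
    (hd_cont : Continuous (fun p : EuclideanSpace ℝ (Fin D) × EuclideanSpace ℝ (Fin D) =>
      dist p.1 p.2))
    (hd_coercive : ∀ x, Filter.Tendsto (fun y => dist x y)
      (Filter.comap (fun y : EuclideanSpace ℝ (Fin D) => ‖y‖) Filter.atTop) Filter.atTop)
    (μ : MeasureTheory.Measure (EuclideanSpace ℝ (Fin D))) [MeasureTheory.IsProbabilityMeasure μ]
    (k : ℕ) (hk : 1 ≤ k) :
    ∃ Cstar : Fin k → EuclideanSpace ℝ (Fin D),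
      ∀ C : Fin k → EuclideanSpace ℝ (Fin D),
        ∫⁻ x, ENNReal.ofReal (⨅ j : Fin k, dist x (Cstar j)) ∂μ ≤
          ∫⁻ x, ENNReal.ofReal (⨅ j : Fin k, dist x (C j)) ∂μ :=
  stmt_5_general dist hd_cont hd_coercive μ k hk
end

section
/- Let d : ℝ^D × ℝ^D → [0, ∞) be a distortion function that is continuous and coercive in its second argument (for every fixed x, d(x, y) → ∞ as ‖y‖₂ → ∞), let μ be a Borel probability measure on ℝ^D, and let S ⊆ ℝ^D be a Borel set. Then S has a centroid: there exists u* ∈ ℝ^D such that ∫_S d(x, u*) dμ(x) ≤ ∫_S d(x, u) dμ(x) for every u ∈ ℝ^D, where the integrals are extended-real-valued lower Lebesgue integrals over S. -/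
open Filter MeasureTheory Topology ENNReal

/-! By Fatou's lemma and the continuity of `d`, the map `u ↦ ∫⁻_S d(x, u) dμ` is lower
semicontinuous, and when `μ S ≠ 0` Fatou's lemma together with coercivity makes it tend to `∞`
away from compact sets. A lower semicontinuous function with this growth attains its minimum on
a compact sublevel set. -/

theorem LowerSemicontinuous.exists_forall_le' {α β : Type*} [TopologicalSpace β] [LinearOrder α]
    {f : β → α} (hf : LowerSemicontinuous f) (x₀ : β)
    (h : ∀ᶠ x in cocompact β, f x₀ ≤ f x) : ∃ x, ∀ y, f x ≤ f y := by
  obtain ⟨K, hK, hKc⟩ := mem_cocompact.mp h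
  obtain ⟨x, hx, hmin⟩ := (hf.lowerSemicontinuousOn _).exists_isMinOn
    (Set.insert_nonempty x₀ K) (hK.insert x₀)
  refine ⟨x, fun y => ?_⟩
  by_cases hy : y ∈ insert x₀ K
  · exact hmin hy
  · exact (hmin (Set.mem_insert x₀ K)).trans (hKc fun hyK => hy (Set.mem_insert_of_mem x₀ hyK))

theorem LowerSemicontinuous.exists_forall_le_of_tendsto_top {α β : Type*} [TopologicalSpace β]
    [Nonempty β] [LinearOrder α] [OrderTop α] [TopologicalSpace α] [OrderTopology α]
    {f : β → α} (hf : LowerSemicontinuous f) (hlim : Tendsto f (cocompact β) (𝓝 ⊤)) :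
    ∃ x, ∀ y, f x ≤ f y := by
  by_cases! htop : ∃ x₀, f x₀ < ⊤
  · obtain ⟨x₀, hx₀⟩ := htop
    exact hf.exists_forall_le' x₀ ((hlim.eventually (Ioi_mem_nhds hx₀)).mono fun _ => le_of_lt)
  · exact ⟨Classical.arbitrary β, fun y => le_top.trans (htop y)⟩

section

variable {α X : Type*} [MeasurableSpace α] {μ : Measure α} {f : α → X → ℝ≥0∞}

theorem lowerSemicontinuous_lintegral [TopologicalSpace X] [FirstCountableTopology X]
    (hf_meas : ∀ y, Measurable (f · y)) (hf : ∀ a, LowerSemicontinuous (f a)) :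
    LowerSemicontinuous fun y => ∫⁻ a, f a y ∂μ :=
  lowerSemicontinuous_iff_le_liminf.mpr fun y =>
    (lintegral_mono fun a => (hf a).le_liminf y).trans (lintegral_liminf_le hf_meas)

theorem tendsto_lintegral_nhds_top {l : Filter X} [l.IsCountablyGenerated] (hμ : μ ≠ 0)
    (hf_meas : ∀ y, Measurable (f · y)) (hf : ∀ a, Tendsto (f a) l (𝓝 ⊤)) :
    Tendsto (fun y => ∫⁻ a, f a y ∂μ) l (𝓝 ⊤) := by
  rcases l.eq_or_neBot with rfl | _
  · exact tendsto_bot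
  refine tendsto_of_le_liminf_of_limsup_le ?_ le_top
  calc ⊤ = ∫⁻ _, ⊤ ∂μ := by simp [hμ]
    _ = ∫⁻ a, liminf (f a) l ∂μ := lintegral_congr fun a => (hf a).liminf_eq.symm
    _ ≤ liminf (fun y => ∫⁻ a, f a y ∂μ) l := lintegral_liminf_le hf_meas

end

theorem stmt_6_general {D : ℕ} (dist : EuclideanSpace ℝ (Fin D) → EuclideanSpace ℝ (Fin D) → ℝ)
    (hd_cont : Continuous (fun p : EuclideanSpace ℝ (Fin D) × EuclideanSpace ℝ (Fin D) =>
      dist p.1 p.2))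
    (hd_coercive : ∀ x, Filter.Tendsto (fun y => dist x y)
      (Filter.comap (fun y : EuclideanSpace ℝ (Fin D) => ‖y‖) Filter.atTop) Filter.atTop)
    (μ : MeasureTheory.Measure (EuclideanSpace ℝ (Fin D)))
    (S : Set (EuclideanSpace ℝ (Fin D))) :
    ∃ ustar : EuclideanSpace ℝ (Fin D),
      ∀ u : EuclideanSpace ℝ (Fin D),
        ∫⁻ x in S, ENNReal.ofReal (dist x ustar) ∂μ ≤
          ∫⁻ x in S, ENNReal.ofReal (dist x u) ∂μ := by
  by_cases hμS : μ S = 0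
  · exact ⟨0, fun u => by simp [Measure.restrict_eq_zero.mpr hμS]⟩
  have hd_ofReal : Continuous fun p : EuclideanSpace ℝ (Fin D) × EuclideanSpace ℝ (Fin D) =>
      ENNReal.ofReal (dist p.1 p.2) := ENNReal.continuous_ofReal.comp hd_cont
  have hmeas : ∀ u, Measurable fun x => ENNReal.ofReal (dist x u) := fun u =>
    (hd_ofReal.comp (continuous_id.prodMk continuous_const)).measurable
  have hlsc := lowerSemicontinuous_lintegral (μ := μ.restrict S) hmeas fun x =>
    (hd_ofReal.comp (continuous_const.prodMk continuous_id)).lowerSemicontinuous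
  have hlim : Tendsto (fun u => ∫⁻ x in S, ENNReal.ofReal (dist x u) ∂μ)
      (cocompact _) (𝓝 ⊤) := by
    rw [← Metric.cobounded_eq_cocompact, ← comap_norm_atTop]
    exact tendsto_lintegral_nhds_top (Measure.restrict_eq_zero.not.mpr hμS) hmeas
      fun x => ENNReal.tendsto_ofReal_atTop.comp (hd_coercive x)
  exact hlsc.exists_forall_le_of_tendsto_top hlim

/-- Existence of a centroid of a Borel set `S`: if the distortion `d` is continuous,
nonnegative, and coercive in its second argument (`d(x,y) → ∞` as `‖y‖₂ → ∞` for each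
fixed `x`), and `μ` is a Borel probability measure on `ℝ^D`, then there exists
`u* ∈ ℝ^D` minimizing `u ↦ ∫⁻_S d(x, u) dμ(x)`. -/
theorem stmt_6 {D : ℕ} (dist : EuclideanSpace ℝ (Fin D) → EuclideanSpace ℝ (Fin D) → ℝ)
    (hd_nonneg : ∀ x y, 0 ≤ dist x y)
    (hd_cont : Continuous (fun p : EuclideanSpace ℝ (Fin D) × EuclideanSpace ℝ (Fin D) =>
      dist p.1 p.2))
    (hd_coercive : ∀ x, Filter.Tendsto (fun y => dist x y)
      (Filter.comap (fun y : EuclideanSpace ℝ (Fin D) => ‖y‖) Filter.atTop) Filter.atTop)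
    (μ : MeasureTheory.Measure (EuclideanSpace ℝ (Fin D))) [MeasureTheory.IsProbabilityMeasure μ]
    (S : Set (EuclideanSpace ℝ (Fin D))) (hS : MeasurableSet S) :
    ∃ ustar : EuclideanSpace ℝ (Fin D),
      ∀ u : EuclideanSpace ℝ (Fin D),
        ∫⁻ x in S, ENNReal.ofReal (dist x ustar) ∂μ ≤
          ∫⁻ x in S, ENNReal.ofReal (dist x u) ∂μ :=
  stmt_6_general dist hd_cont hd_coercive μ S
end
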